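/- Normal form theorem for SCL: for every closed SCL-term P there exists an SCL-term Q in SCL Normal Form (SNF) such that EqFSCL ⊢ P = Q (the paper exhibits such a Q as f(P) for an explicit terminating normalization function f : ST → SNF). -/
import Mathlib


/-! Shared definitions for left-sequential logics (FEL and SCL),
    evaluation trees, and decompositions. -/

/-- FEL-terms over atoms `A` (`and` = full left-sequential conjunction `∧•`,
    `or` = full left-sequential disjunction `∨•`). -/
inductive FTerm (A : Type) : Type
  | atom : A → FTerm A
  | tru  : FTerm A
  | fls  : FTerm A
  | neg  : FTerm A → FTerm A
  | and  : FTerm A → FTerm A → FTerm A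
  | or   : FTerm A → FTerm A → FTerm A

/-- SCL-terms over atoms `A` (`and` = short-circuit conjunction `∧◦`,
    `or` = short-circuit disjunction `∨◦`). -/
inductive STerm (A : Type) : Type
  | atom : A → STerm A
  | tru  : STerm A
  | fls  : STerm A
  | neg  : STerm A → STerm A
  | and  : STerm A → STerm A → STerm A
  | or   : STerm A → STerm A → STerm A

/-- Evaluation trees: finite binary trees over `A` with leaves `T`, `F`. -/
inductive ETree (A : Type) : Type
  | tru  : ETree A
  | fls  : ETree A
  | node : ETree A → A → ETree A → ETree A

namespace ETree

/-- `X.subst Y Z = X[T↦Y, F↦Z]`. -/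
def subst {A : Type} : ETree A → ETree A → ETree A → ETree A
  | .tru, y, _ => y
  | .fls, _, z => z
  | .node l a r, y, z => .node (subst l y z) a (subst r y z)

def hasTru {A : Type} : ETree A → Prop
  | .tru => True
  | .fls => False
  | .node l _ r => hasTru l ∨ hasTru r

def hasFls {A : Type} : ETree A → Prop
  | .tru => False
  | .fls => True
  | .node l _ r => hasFls l ∨ hasFls r

def depth {A : Type} : ETree A → ℕ
  | .tru => 0
  | .fls => 0
  | .node l _ r => 1 + max (depth l) (depth r)

end ETree

/-- The full evaluation function `fe : FTerm → 𝒯`. -/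
def fe {A : Type} : FTerm A → ETree A
  | FTerm.tru => ETree.tru
  | FTerm.fls => ETree.fls
  | FTerm.atom a => ETree.node ETree.tru a ETree.fls
  | FTerm.neg p => (fe p).subst ETree.fls ETree.tru
  | FTerm.and p q => (fe p).subst (fe q) ((fe q).subst ETree.fls ETree.fls)
  | FTerm.or p q => (fe p).subst ((fe q).subst ETree.tru ETree.tru) (fe q)

/-- The short-circuit evaluation function `se : STerm → 𝒯`. -/
def se {A : Type} : STerm A → ETree A
  | STerm.tru => ETree.tru
  | STerm.fls => ETree.fls
  | STerm.atom a => ETree.node ETree.tru a ETree.fls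
  | STerm.neg p => (se p).subst ETree.fls ETree.tru
  | STerm.and p q => (se p).subst (se q) ETree.fls
  | STerm.or p q => (se p).subst ETree.tru (se q)

/-- Derivability from EqFFEL by equational logic. -/
inductive EqFFEL {A : Type} : FTerm A → FTerm A → Prop
  | refl (p : FTerm A) : EqFFEL p p
  | symm {p q : FTerm A} : EqFFEL p q → EqFFEL q p
  | trans {p q r : FTerm A} : EqFFEL p q → EqFFEL q r → EqFFEL p r
  | neg_congr {p q : FTerm A} : EqFFEL p q → EqFFEL (FTerm.neg p) (FTerm.neg q)
  | and_congr {p p' q q' : FTerm A} :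
      EqFFEL p p' → EqFFEL q q' → EqFFEL (FTerm.and p q) (FTerm.and p' q')
  | or_congr {p p' q q' : FTerm A} :
      EqFFEL p p' → EqFFEL q q' → EqFFEL (FTerm.or p q) (FTerm.or p' q')
  | fel1 : EqFFEL FTerm.fls (FTerm.neg FTerm.tru)
  | fel2 (x y : FTerm A) : EqFFEL (FTerm.or x y) (FTerm.neg (FTerm.and (FTerm.neg x) (FTerm.neg y)))
  | fel3 (x : FTerm A) : EqFFEL (FTerm.neg (FTerm.neg x)) x
  | fel4 (x y z : FTerm A) : EqFFEL (FTerm.and (FTerm.and x y) z) (FTerm.and x (FTerm.and y z))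
  | fel5 (x : FTerm A) : EqFFEL (FTerm.and FTerm.tru x) x
  | fel6 (x : FTerm A) : EqFFEL (FTerm.and x FTerm.tru) x
  | fel7 (x : FTerm A) : EqFFEL (FTerm.and x FTerm.fls) (FTerm.and FTerm.fls x)
  | fel8 (x : FTerm A) : EqFFEL (FTerm.and x FTerm.fls) (FTerm.and (FTerm.neg x) FTerm.fls)
  | fel9 (x y : FTerm A) :
      EqFFEL (FTerm.or (FTerm.and x FTerm.fls) y) (FTerm.and (FTerm.or x FTerm.tru) y)
  | fel10 (x y : FTerm A) :
      EqFFEL (FTerm.or x (FTerm.and y FTerm.fls)) (FTerm.and x (FTerm.or y FTerm.tru))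

/-- Derivability from EqFSCL by equational logic. -/
inductive EqFSCL {A : Type} : STerm A → STerm A → Prop
  | refl (p : STerm A) : EqFSCL p p
  | symm {p q : STerm A} : EqFSCL p q → EqFSCL q p
  | trans {p q r : STerm A} : EqFSCL p q → EqFSCL q r → EqFSCL p r
  | neg_congr {p q : STerm A} : EqFSCL p q → EqFSCL (STerm.neg p) (STerm.neg q)
  | and_congr {p p' q q' : STerm A} :
      EqFSCL p p' → EqFSCL q q' → EqFSCL (STerm.and p q) (STerm.and p' q')
  | or_congr {p p' q q' : STerm A} :
      EqFSCL p p' → EqFSCL q q' → EqFSCL (STerm.or p q) (STerm.or p' q')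
  | scl1 : EqFSCL STerm.fls (STerm.neg STerm.tru)
  | scl2 (x y : STerm A) : EqFSCL (STerm.or x y) (STerm.neg (STerm.and (STerm.neg x) (STerm.neg y)))
  | scl3 (x : STerm A) : EqFSCL (STerm.neg (STerm.neg x)) x
  | scl4 (x y z : STerm A) : EqFSCL (STerm.and (STerm.and x y) z) (STerm.and x (STerm.and y z))
  | scl5 (x : STerm A) : EqFSCL (STerm.and STerm.tru x) x
  | scl6 (x : STerm A) : EqFSCL (STerm.and x STerm.tru) x
  | scl7 (x : STerm A) : EqFSCL (STerm.and STerm.fls x) STerm.fls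
  | scl8 (x : STerm A) : EqFSCL (STerm.and x STerm.fls) (STerm.and (STerm.neg x) STerm.fls)
  | scl9 (x y : STerm A) :
      EqFSCL (STerm.or (STerm.and x STerm.fls) y) (STerm.and (STerm.or x STerm.tru) y)
  | scl10 (x y z : STerm A) :
      EqFSCL (STerm.or (STerm.and x y) (STerm.and z STerm.fls))
             (STerm.and (STerm.or x (STerm.and z STerm.fls)) (STerm.or y (STerm.and z STerm.fls)))

/-! ### FEL Normal Form grammar -/

/-- T-terms: `P^T ::= T | a ∨• P^T`. -/
inductive IsFT_T {A : Type} : FTerm A → Prop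
  | tru : IsFT_T FTerm.tru
  | or (a : A) {p : FTerm A} : IsFT_T p → IsFT_T (FTerm.or (FTerm.atom a) p)

/-- F-terms: `P^F ::= F | a ∧• P^F`. -/
inductive IsFT_F {A : Type} : FTerm A → Prop
  | fls : IsFT_F FTerm.fls
  | and (a : A) {p : FTerm A} : IsFT_F p → IsFT_F (FTerm.and (FTerm.atom a) p)

/-- ℓ-terms: `P^ℓ ::= a ∧• P^T | ¬a ∧• P^T`. -/
inductive IsFT_L {A : Type} : FTerm A → Prop
  | pos (a : A) {p : FTerm A} : IsFT_T p → IsFT_L (FTerm.and (FTerm.atom a) p)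
  | neg (a : A) {p : FTerm A} : IsFT_T p → IsFT_L (FTerm.and (FTerm.neg (FTerm.atom a)) p)

mutual
/-- `P^c ::= P^ℓ | P^* ∧• P^d`. -/
inductive IsFT_C {A : Type} : FTerm A → Prop
  | ell {p : FTerm A} : IsFT_L p → IsFT_C p
  | and {p q : FTerm A} : IsFT_Star p → IsFT_D q → IsFT_C (FTerm.and p q)
/-- `P^d ::= P^ℓ | P^* ∨• P^c`. -/
inductive IsFT_D {A : Type} : FTerm A → Prop
  | ell {p : FTerm A} : IsFT_L p → IsFT_D p
  | or {p q : FTerm A} : IsFT_Star p → IsFT_C q → IsFT_D (FTerm.or p q)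
/-- `P^* ::= P^c | P^d`. -/
inductive IsFT_Star {A : Type} : FTerm A → Prop
  | c {p : FTerm A} : IsFT_C p → IsFT_Star p
  | d {p : FTerm A} : IsFT_D p → IsFT_Star p
end

/-- FEL Normal Form: `P ::= P^T | P^F | P^T ∧• P^*`. -/
inductive IsFNF {A : Type} : FTerm A → Prop
  | t {p : FTerm A} : IsFT_T p → IsFNF p
  | f {p : FTerm A} : IsFT_F p → IsFNF p
  | ts {p q : FTerm A} : IsFT_T p → IsFT_Star q → IsFNF (FTerm.and p q)

/-! ### SCL Normal Form grammar -/

/-- T-terms: `P^T ::= T | (a ∧◦ P^T) ∨◦ P^T`. -/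
inductive IsST_T {A : Type} : STerm A → Prop
  | tru : IsST_T STerm.tru
  | or (a : A) {p q : STerm A} :
      IsST_T p → IsST_T q → IsST_T (STerm.or (STerm.and (STerm.atom a) p) q)

/-- F-terms: `P^F ::= F | (a ∨◦ P^F) ∧◦ P^F`. -/
inductive IsST_F {A : Type} : STerm A → Prop
  | fls : IsST_F STerm.fls
  | and (a : A) {p q : STerm A} :
      IsST_F p → IsST_F q → IsST_F (STerm.and (STerm.or (STerm.atom a) p) q)

/-- ℓ-terms: `P^ℓ ::= (a ∧◦ P^T) ∨◦ P^F | (¬a ∧◦ P^T) ∨◦ P^F`. -/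
inductive IsST_L {A : Type} : STerm A → Prop
  | pos (a : A) {p q : STerm A} :
      IsST_T p → IsST_F q → IsST_L (STerm.or (STerm.and (STerm.atom a) p) q)
  | neg (a : A) {p q : STerm A} :
      IsST_T p → IsST_F q → IsST_L (STerm.or (STerm.and (STerm.neg (STerm.atom a)) p) q)

mutual
/-- `P^c ::= P^ℓ | P^* ∧◦ P^d`. -/
inductive IsST_C {A : Type} : STerm A → Prop
  | ell {p : STerm A} : IsST_L p → IsST_C p
  | and {p q : STerm A} : IsST_Star p → IsST_D q → IsST_C (STerm.and p q)
/-- `P^d ::= P^ℓ | P^* ∨◦ P^c`. -/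
inductive IsST_D {A : Type} : STerm A → Prop
  | ell {p : STerm A} : IsST_L p → IsST_D p
  | or {p q : STerm A} : IsST_Star p → IsST_C q → IsST_D (STerm.or p q)
/-- `P^* ::= P^c | P^d`. -/
inductive IsST_Star {A : Type} : STerm A → Prop
  | c {p : STerm A} : IsST_C p → IsST_Star p
  | d {p : STerm A} : IsST_D p → IsST_Star p
end

/-- SCL Normal Form: `P ::= P^T | P^F | P^T ∧◦ P^*`. -/
inductive IsSNF {A : Type} : STerm A → Prop
  | t {p : STerm A} : IsST_T p → IsSNF p
  | f {p : STerm A} : IsST_F p → IsSNF p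
  | ts {p q : STerm A} : IsST_T p → IsST_Star q → IsSNF (STerm.and p q)

/-! ### Trees with box leaves -/

/-- `𝒯_□`: trees over `A` with leaves in `{T, F, □}`. -/
inductive ETreeB (A : Type) : Type
  | tru  : ETreeB A
  | fls  : ETreeB A
  | box  : ETreeB A
  | node : ETreeB A → A → ETreeB A → ETreeB A

namespace ETreeB

/-- `X.substBox Y = X[□↦Y]`. -/
def substBox {A : Type} : ETreeB A → ETree A → ETree A
  | .tru, _ => ETree.tru
  | .fls, _ => ETree.fls
  | .box, y => y
  | .node l a r, y => ETree.node (substBox l y) a (substBox r y)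

def hasBox {A : Type} : ETreeB A → Prop
  | .tru => False
  | .fls => False
  | .box => True
  | .node l _ r => hasBox l ∨ hasBox r

def hasTru {A : Type} : ETreeB A → Prop
  | .tru => True
  | .fls => False
  | .box => False
  | .node l _ r => hasTru l ∨ hasTru r

def hasFls {A : Type} : ETreeB A → Prop
  | .tru => False
  | .fls => True
  | .box => False
  | .node l _ r => hasFls l ∨ hasFls r

end ETreeB

/-- `𝒯_{1,2}`: trees over `A` with leaves in `{T, F, □₁, □₂}`. -/
inductive ETree2 (A : Type) : Type
  | tru  : ETree2 A
  | fls  : ETree2 A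
  | box1 : ETree2 A
  | box2 : ETree2 A
  | node : ETree2 A → A → ETree2 A → ETree2 A

namespace ETree2

/-- `X.substBoxes Y Z = X[□₁↦Y, □₂↦Z]`. -/
def substBoxes {A : Type} : ETree2 A → ETree A → ETree A → ETree A
  | .tru, _, _ => ETree.tru
  | .fls, _, _ => ETree.fls
  | .box1, y, _ => y
  | .box2, _, z => z
  | .node l a r, y, z => ETree.node (substBoxes l y z) a (substBoxes r y z)

def hasBox1 {A : Type} : ETree2 A → Prop
  | .tru => False
  | .fls => False
  | .box1 => True
  | .box2 => False
  | .node l _ r => hasBox1 l ∨ hasBox1 r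

def hasBox2 {A : Type} : ETree2 A → Prop
  | .tru => False
  | .fls => False
  | .box1 => False
  | .box2 => True
  | .node l _ r => hasBox2 l ∨ hasBox2 r

def hasTru {A : Type} : ETree2 A → Prop
  | .tru => True
  | .fls => False
  | .box1 => False
  | .box2 => False
  | .node l _ r => hasTru l ∨ hasTru r

def hasFls {A : Type} : ETree2 A → Prop
  | .tru => False
  | .fls => True
  | .box1 => False
  | .box2 => False
  | .node l _ r => hasFls l ∨ hasFls r

end ETree2

namespace ETree

/-- `X[T↦□₁, F↦□₂]`. -/
def toBoxes {A : Type} : ETree A → ETree2 A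
  | .tru => ETree2.box1
  | .fls => ETree2.box2
  | .node l a r => ETree2.node (toBoxes l) a (toBoxes r)

/-- `X[T↦□]`. -/
def truToBox {A : Type} : ETree A → ETreeB A
  | .tru => ETreeB.box
  | .fls => ETreeB.fls
  | .node l a r => ETreeB.node (truToBox l) a (truToBox r)

/-- `X[F↦□]`. -/
def flsToBox {A : Type} : ETree A → ETreeB A
  | .tru => ETreeB.tru
  | .fls => ETreeB.box
  | .node l a r => ETreeB.node (flsToBox l) a (flsToBox r)

end ETree

/-! ### FEL decompositions -/

/-- Candidate conjunction decomposition (FEL):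
    `X = Y[□₁↦Z, □₂↦Z[T↦F]]`, `Y` contains both boxes, neither `T` nor `F`,
    and `Z` contains both `T` and `F`. -/
def IsCcdF {A : Type} (X : ETree A) (Y : ETree2 A) (Z : ETree A) : Prop :=
  X = Y.substBoxes Z (Z.subst ETree.fls ETree.fls) ∧
  Y.hasBox1 ∧ Y.hasBox2 ∧ ¬ Y.hasTru ∧ ¬ Y.hasFls ∧ Z.hasTru ∧ Z.hasFls

/-- Candidate disjunction decomposition (FEL):
    `X = Y[□₁↦Z[F↦T], □₂↦Z]` with the same side conditions. -/
def IsCddF {A : Type} (X : ETree A) (Y : ETree2 A) (Z : ETree A) : Prop :=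
  X = Y.substBoxes (Z.subst ETree.tru ETree.tru) Z ∧
  Y.hasBox1 ∧ Y.hasBox2 ∧ ¬ Y.hasTru ∧ ¬ Y.hasFls ∧ Z.hasTru ∧ Z.hasFls

/-- Conjunction decomposition (FEL): a ccd with `Z` of minimal depth. -/
def IsCdF {A : Type} (X : ETree A) (Y : ETree2 A) (Z : ETree A) : Prop :=
  IsCcdF X Y Z ∧ ∀ (Y' : ETree2 A) (Z' : ETree A), IsCcdF X Y' Z' → Z.depth ≤ Z'.depth

/-- Disjunction decomposition (FEL): a cdd with `Z` of minimal depth. -/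
def IsDdF {A : Type} (X : ETree A) (Y : ETree2 A) (Z : ETree A) : Prop :=
  IsCddF X Y Z ∧ ∀ (Y' : ETree2 A) (Z' : ETree A), IsCddF X Y' Z' → Z.depth ≤ Z'.depth

/-- T-*-decomposition (FEL): `X = Y[□↦Z]`, `Y` contains neither `T` nor `F`,
    and `Z` admits no nontrivial box decomposition. -/
def IsTsdF {A : Type} (X : ETree A) (Y : ETreeB A) (Z : ETree A) : Prop :=
  X = Y.substBox Z ∧ ¬ Y.hasTru ∧ ¬ Y.hasFls ∧
  ¬ ∃ (U : ETreeB A) (V : ETree A),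
      Z = U.substBox V ∧ U.hasBox ∧ U ≠ ETreeB.box ∧ ¬ U.hasTru ∧ ¬ U.hasFls

/-! ### SCL decompositions -/

/-- Candidate conjunction decomposition (SCL): `X = Y[□↦Z]`, `Y` contains `□`,
    `Y` contains `F` but not `T`, and `Z` contains both `T` and `F`. -/
def IsCcdS {A : Type} (X : ETree A) (Y : ETreeB A) (Z : ETree A) : Prop :=
  X = Y.substBox Z ∧ Y.hasBox ∧ Y.hasFls ∧ ¬ Y.hasTru ∧ Z.hasTru ∧ Z.hasFls

/-- Candidate disjunction decomposition (SCL): `X = Y[□↦Z]`, `Y` contains `□`,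
    `Y` contains `T` but not `F`, and `Z` contains both `T` and `F`. -/
def IsCddS {A : Type} (X : ETree A) (Y : ETreeB A) (Z : ETree A) : Prop :=
  X = Y.substBox Z ∧ Y.hasBox ∧ Y.hasTru ∧ ¬ Y.hasFls ∧ Z.hasTru ∧ Z.hasFls

/-- Conjunction decomposition (SCL): a ccd with `Z` of minimal depth. -/
def IsCdS {A : Type} (X : ETree A) (Y : ETreeB A) (Z : ETree A) : Prop :=
  IsCcdS X Y Z ∧ ∀ (Y' : ETreeB A) (Z' : ETree A), IsCcdS X Y' Z' → Z.depth ≤ Z'.depth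

/-- Disjunction decomposition (SCL): a cdd with `Z` of minimal depth. -/
def IsDdS {A : Type} (X : ETree A) (Y : ETreeB A) (Z : ETree A) : Prop :=
  IsCddS X Y Z ∧ ∀ (Y' : ETreeB A) (Z' : ETree A), IsCddS X Y' Z' → Z.depth ≤ Z'.depth

/-- Candidate T-*-decomposition (SCL). -/
def IsCtsdS {A : Type} (X : ETree A) (Y : ETreeB A) (Z : ETree A) : Prop :=
  X = Y.substBox Z ∧ ¬ Y.hasTru ∧ ¬ Y.hasFls ∧
  ¬ ∃ (U : ETreeB A) (V : ETree A),
      Z = U.substBox V ∧ U.hasBox ∧ U ≠ ETreeB.box ∧ ¬ U.hasTru ∧ ¬ U.hasFls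

/-- T-*-decomposition (SCL): a ctsd with `Z` of minimal depth. -/
def IsTsdS {A : Type} (X : ETree A) (Y : ETreeB A) (Z : ETree A) : Prop :=
  IsCtsdS X Y Z ∧ ∀ (Y' : ETreeB A) (Z' : ETree A), IsCtsdS X Y' Z' → Z.depth ≤ Z'.depth

/-- The translation `h : FTerm → STerm` from FEL-terms to SCL-terms. -/
def hTrans {A : Type} : FTerm A → STerm A
  | FTerm.tru => STerm.tru
  | FTerm.fls => STerm.fls
  | FTerm.atom a => STerm.atom a
  | FTerm.neg p => STerm.neg (hTrans p)
  | FTerm.and p q => STerm.and (STerm.or (hTrans p) (STerm.and (hTrans q) STerm.fls)) (hTrans q)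
  | FTerm.or p q => STerm.or (STerm.and (hTrans p) (STerm.or (hTrans q) STerm.tru)) (hTrans q)

/-! ### Auxiliary development for the SCL normal form theorem -/

namespace SCLProof

variable {A : Type}

local infixl:63 " ⋏ " => STerm.and
local infixl:62 " ⋎ " => STerm.or
local prefix:80 "∼" => STerm.neg
local infix:48 " ≋ " => EqFSCL

local notation "⊤" => STerm.tru
local notation "⊥" => STerm.fls

instance : Trans (EqFSCL (A := A)) (EqFSCL (A := A)) (EqFSCL (A := A)) :=
  ⟨EqFSCL.trans⟩

theorem rf {x : STerm A} : x ≋ x := EqFSCL.refl x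

theorem andc {x x' y y' : STerm A} (h1 : x ≋ x') (h2 : y ≋ y') :
    (x ⋏ y) ≋ (x' ⋏ y') := EqFSCL.and_congr h1 h2

theorem orc {x x' y y' : STerm A} (h1 : x ≋ x') (h2 : y ≋ y') :
    (x ⋎ y) ≋ (x' ⋎ y') := EqFSCL.or_congr h1 h2

theorem negc {x x' : STerm A} (h1 : x ≋ x') : (∼x) ≋ (∼x') :=
  EqFSCL.neg_congr h1

theorem nn (x : STerm A) : (∼∼x) ≋ x := EqFSCL.scl3 x

theorem negT : (∼⊤ : STerm A) ≋ ⊥ := EqFSCL.scl1.symm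

theorem negF : (∼⊥ : STerm A) ≋ ⊤ :=
  (negc EqFSCL.scl1).trans (nn _)

theorem dm_or (x y : STerm A) : (∼(x ⋎ y)) ≋ (∼x ⋏ ∼y) :=
  (negc (EqFSCL.scl2 x y)).trans (nn _)

theorem dm_and (x y : STerm A) : (∼(x ⋏ y)) ≋ (∼x ⋎ ∼y) :=
  (((EqFSCL.scl2 (∼x) (∼y)).trans (negc (andc (nn x) (nn y))))).symm

theorem neg_inj {x y : STerm A} (h : (∼x) ≋ (∼y)) : x ≋ y :=
  (nn x).symm.trans ((negc h).trans (nn y))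

theorem orT (x : STerm A) : (⊤ ⋎ x) ≋ ⊤ :=
  calc (⊤ ⋎ x) ≋ ∼(∼⊤ ⋏ ∼x) := EqFSCL.scl2 _ _
    _ ≋ ∼(⊥ ⋏ ∼x) := negc (andc negT rf)
    _ ≋ ∼⊥ := negc (EqFSCL.scl7 _)
    _ ≋ ⊤ := negF

theorem orF (x : STerm A) : (x ⋎ ⊥) ≋ x :=
  calc (x ⋎ ⊥) ≋ ∼(∼x ⋏ ∼⊥) := EqFSCL.scl2 _ _
    _ ≋ ∼(∼x ⋏ ⊤) := negc (andc rf negF)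
    _ ≋ ∼∼x := negc (EqFSCL.scl6 _)
    _ ≋ x := nn x

theorem For (x : STerm A) : (⊥ ⋎ x) ≋ x :=
  calc (⊥ ⋎ x) ≋ ∼(∼⊥ ⋏ ∼x) := EqFSCL.scl2 _ _
    _ ≋ ∼(⊤ ⋏ ∼x) := negc (andc negF rf)
    _ ≋ ∼∼x := negc (EqFSCL.scl5 _)
    _ ≋ x := nn x

theorem or_assoc3 (x y z : STerm A) : ((x ⋎ y) ⋎ z) ≋ (x ⋎ (y ⋎ z)) :=
  calc ((x ⋎ y) ⋎ z) ≋ ∼(∼(x ⋎ y) ⋏ ∼z) := EqFSCL.scl2 _ _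
    _ ≋ ∼((∼x ⋏ ∼y) ⋏ ∼z) := negc (andc (dm_or x y) rf)
    _ ≋ ∼(∼x ⋏ (∼y ⋏ ∼z)) := negc (EqFSCL.scl4 _ _ _)
    _ ≋ ∼(∼x ⋏ ∼(y ⋎ z)) := negc (andc rf (dm_or y z).symm)
    _ ≋ (x ⋎ (y ⋎ z)) := (EqFSCL.scl2 _ _).symm

theorem negandF (x : STerm A) : (∼x ⋏ ⊥) ≋ (x ⋏ ⊥) := (EqFSCL.scl8 x).symm

theorem negorT (x : STerm A) : (∼x ⋎ ⊤) ≋ (x ⋎ ⊤) :=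
  calc (∼x ⋎ ⊤) ≋ ∼(∼∼x ⋏ ∼⊤) := EqFSCL.scl2 _ _
    _ ≋ ∼(x ⋏ ⊥) := negc (andc (nn x) negT)
    _ ≋ ∼(∼x ⋏ ⊥) := negc (EqFSCL.scl8 x)
    _ ≋ ∼(∼x ⋏ ∼⊤) := negc (andc rf negT.symm)
    _ ≋ (x ⋎ ⊤) := (EqFSCL.scl2 _ _).symm

/-- `(w ⋎ v) ⋏ ⊥ = (w ⋎ ∼v) ⋏ ⊥`. -/
theorem D7 (w v : STerm A) : ((w ⋎ v) ⋏ ⊥) ≋ ((w ⋎ ∼v) ⋏ ⊥) :=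
  calc ((w ⋎ v) ⋏ ⊥) ≋ (∼(w ⋎ v) ⋏ ⊥) := EqFSCL.scl8 _
    _ ≋ ((∼w ⋏ ∼v) ⋏ ⊥) := andc (dm_or _ _) rf
    _ ≋ (∼w ⋏ (∼v ⋏ ⊥)) := EqFSCL.scl4 _ _ _
    _ ≋ (∼w ⋏ (v ⋏ ⊥)) := andc rf (negandF v)
    _ ≋ ((∼w ⋏ v) ⋏ ⊥) := (EqFSCL.scl4 _ _ _).symm
    _ ≋ (∼(∼w ⋏ v) ⋏ ⊥) := EqFSCL.scl8 _
    _ ≋ ((w ⋎ ∼v) ⋏ ⊥) := andc ((dm_and _ _).trans (orc (nn w) rf)) rf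

/-- `(u ⋎ v) ⋏ ⊥ = ∼u ⋏ (v ⋏ ⊥)`. -/
theorem ORF (u v : STerm A) : ((u ⋎ v) ⋏ ⊥) ≋ (∼u ⋏ (v ⋏ ⊥)) :=
  calc ((u ⋎ v) ⋏ ⊥) ≋ (∼(u ⋎ v) ⋏ ⊥) := EqFSCL.scl8 _
    _ ≋ ((∼u ⋏ ∼v) ⋏ ⊥) := andc (dm_or _ _) rf
    _ ≋ (∼u ⋏ (∼v ⋏ ⊥)) := EqFSCL.scl4 _ _ _
    _ ≋ (∼u ⋏ (v ⋏ ⊥)) := andc rf (negandF v)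

/-- `∼u ⋏ Z = (u ⋎ Z) ⋏ ⊥` for `Z` F-stable. -/
theorem NANDF (u Z : STerm A) (hZ : (Z ⋏ ⊥) ≋ Z) :
    (∼u ⋏ Z) ≋ ((u ⋎ Z) ⋏ ⊥) :=
  calc (∼u ⋏ Z) ≋ (∼u ⋏ (Z ⋏ ⊥)) := andc rf hZ.symm
    _ ≋ ((∼u ⋏ Z) ⋏ ⊥) := (EqFSCL.scl4 _ _ _).symm
    _ ≋ (∼(∼u ⋏ Z) ⋏ ⊥) := EqFSCL.scl8 _
    _ ≋ ((u ⋎ ∼Z) ⋏ ⊥) := andc ((dm_and _ _).trans (orc (nn u) rf)) rf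
    _ ≋ ((u ⋎ Z) ⋏ ⊥) := (D7 u Z).symm

theorem zz {Z : STerm A} (hZ : (Z ⋏ ⊥) ≋ Z) : (Z ⋏ Z) ≋ Z :=
  calc (Z ⋏ Z) ≋ ((Z ⋏ ⊥) ⋏ Z) := andc hZ.symm rf
    _ ≋ (Z ⋏ (⊥ ⋏ Z)) := EqFSCL.scl4 _ _ _
    _ ≋ (Z ⋏ ⊥) := andc rf (EqFSCL.scl7 _)
    _ ≋ Z := hZ

theorem mulF (q : STerm A) {Z : STerm A} (hZ : (Z ⋏ ⊥) ≋ Z) :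
    ((q ⋏ Z) ⋏ ⊥) ≋ (q ⋏ Z) := (EqFSCL.scl4 _ _ _).trans (andc rf hZ)

theorem fandStable {Q : STerm A} (W : STerm A) (hQ : (Q ⋏ ⊥) ≋ Q) :
    (Q ⋏ W) ≋ Q :=
  calc (Q ⋏ W) ≋ ((Q ⋏ ⊥) ⋏ W) := andc hQ.symm rf
    _ ≋ (Q ⋏ (⊥ ⋏ W)) := EqFSCL.scl4 _ _ _
    _ ≋ (Q ⋏ ⊥) := andc rf (EqFSCL.scl7 _)
    _ ≋ Q := hQ

/-- Core decomposition: `(u ⋎ v) ⋏ Z = (∼u ⋎ Z) ⋏ (v ⋏ Z)` for `Z` F-stable. -/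
theorem CORE (u v Z : STerm A) (hZ : (Z ⋏ ⊥) ≋ Z) :
    ((u ⋎ v) ⋏ Z) ≋ ((∼u ⋎ Z) ⋏ (v ⋏ Z)) :=
  calc ((u ⋎ v) ⋏ Z) ≋ (∼∼(u ⋎ v) ⋏ Z) := andc (nn _).symm rf
    _ ≋ ((∼(u ⋎ v) ⋎ Z) ⋏ ⊥) := NANDF _ Z hZ
    _ ≋ (((∼u ⋏ ∼v) ⋎ Z) ⋏ ⊥) := andc (orc (dm_or u v) rf) rf
    _ ≋ (((∼u ⋏ ∼v) ⋎ (Z ⋏ ⊥)) ⋏ ⊥) := andc (orc rf hZ.symm) rf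
    _ ≋ (((∼u ⋎ (Z ⋏ ⊥)) ⋏ (∼v ⋎ (Z ⋏ ⊥))) ⋏ ⊥) := andc (EqFSCL.scl10 _ _ _) rf
    _ ≋ (((∼u ⋎ Z) ⋏ (∼v ⋎ Z)) ⋏ ⊥) := andc (andc (orc rf hZ) (orc rf hZ)) rf
    _ ≋ ((∼u ⋎ Z) ⋏ ((∼v ⋎ Z) ⋏ ⊥)) := EqFSCL.scl4 _ _ _
    _ ≋ ((∼u ⋎ Z) ⋏ (∼∼v ⋏ (Z ⋏ ⊥))) := andc rf (ORF _ _)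
    _ ≋ ((∼u ⋎ Z) ⋏ (v ⋏ Z)) := andc rf (andc (nn v) hZ)

theorem lam5 (x Q W : STerm A) (hQ : (Q ⋏ ⊥) ≋ Q) (hW : (W ⋏ ⊥) ≋ W) :
    ((∼x ⋎ Q) ⋏ W) ≋ ((x ⋎ W) ⋏ Q) :=
  calc ((∼x ⋎ Q) ⋏ W) ≋ ((∼∼x ⋎ W) ⋏ (Q ⋏ W)) := CORE (∼x) Q W hW
    _ ≋ ((x ⋎ W) ⋏ (Q ⋏ W)) := andc (orc (nn x) rf) rf
    _ ≋ ((x ⋎ W) ⋏ Q) := andc rf (fandStable W hQ)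

theorem lam9 (p v Z : STerm A) (hZ : (Z ⋏ ⊥) ≋ Z) :
    ((p ⋎ v) ⋏ Z) ≋ ((p ⋎ (v ⋏ Z)) ⋏ Z) := by
  have h1 := CORE p v Z hZ
  have h2 := CORE p (v ⋏ Z) Z hZ
  have h3 : ((v ⋏ Z) ⋏ Z) ≋ (v ⋏ Z) :=
    (EqFSCL.scl4 _ _ _).trans (andc rf (zz hZ))
  exact h1.trans ((h2.trans (andc rf h3)).symm)

theorem lam2 (x p q Z : STerm A) (hZ : (Z ⋏ ⊥) ≋ Z) :
    (((x ⋏ p) ⋎ q) ⋏ Z) ≋ ((x ⋎ (q ⋏ Z)) ⋏ ((p ⋎ q) ⋏ Z)) := by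
  have h3 : ((x ⋏ p) ⋎ (q ⋏ Z)) ≋ ((x ⋎ (q ⋏ Z)) ⋏ (p ⋎ (q ⋏ Z))) :=
    calc ((x ⋏ p) ⋎ (q ⋏ Z)) ≋ ((x ⋏ p) ⋎ ((q ⋏ Z) ⋏ ⊥)) := orc rf (mulF q hZ).symm
      _ ≋ ((x ⋎ ((q ⋏ Z) ⋏ ⊥)) ⋏ (p ⋎ ((q ⋏ Z) ⋏ ⊥))) := EqFSCL.scl10 _ _ _
      _ ≋ ((x ⋎ (q ⋏ Z)) ⋏ (p ⋎ (q ⋏ Z))) := andc (orc rf (mulF q hZ)) (orc rf (mulF q hZ))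
  calc (((x ⋏ p) ⋎ q) ⋏ Z) ≋ ((∼(x ⋏ p) ⋎ Z) ⋏ (q ⋏ Z)) := CORE _ q Z hZ
    _ ≋ (((x ⋏ p) ⋎ (q ⋏ Z)) ⋏ Z) := lam5 (x ⋏ p) Z (q ⋏ Z) hZ (mulF q hZ)
    _ ≋ (((x ⋎ (q ⋏ Z)) ⋏ (p ⋎ (q ⋏ Z))) ⋏ Z) := andc h3 rf
    _ ≋ ((x ⋎ (q ⋏ Z)) ⋏ ((p ⋎ (q ⋏ Z)) ⋏ Z)) := EqFSCL.scl4 _ _ _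
    _ ≋ ((x ⋎ (q ⋏ Z)) ⋏ ((p ⋎ q) ⋏ Z)) := andc rf (lam9 p q Z hZ).symm

/-- dual of scl10. -/
theorem lam4g (x y z : STerm A) :
    ((x ⋎ y) ⋏ (z ⋎ ⊤)) ≋ ((x ⋏ (z ⋎ ⊤)) ⋎ (y ⋏ (z ⋎ ⊤))) := by
  apply neg_inj
  have hL : (∼((x ⋎ y) ⋏ (z ⋎ ⊤))) ≋ ((∼x ⋎ (∼z ⋏ ⊥)) ⋏ (∼y ⋎ (∼z ⋏ ⊥))) :=
    calc (∼((x ⋎ y) ⋏ (z ⋎ ⊤))) ≋ (∼(x ⋎ y) ⋎ ∼(z ⋎ ⊤)) := dm_and _ _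
      _ ≋ ((∼x ⋏ ∼y) ⋎ (∼z ⋏ ∼⊤)) := orc (dm_or _ _) (dm_or _ _)
      _ ≋ ((∼x ⋏ ∼y) ⋎ (∼z ⋏ ⊥)) := orc rf (andc rf negT)
      _ ≋ ((∼x ⋎ (∼z ⋏ ⊥)) ⋏ (∼y ⋎ (∼z ⋏ ⊥))) := EqFSCL.scl10 _ _ _
  have hR : (∼((x ⋏ (z ⋎ ⊤)) ⋎ (y ⋏ (z ⋎ ⊤)))) ≋
      ((∼x ⋎ (∼z ⋏ ⊥)) ⋏ (∼y ⋎ (∼z ⋏ ⊥))) := by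
    have hz : (∼(z ⋎ ⊤)) ≋ (∼z ⋏ ⊥) :=
      (dm_or _ _).trans (andc rf negT)
    calc (∼((x ⋏ (z ⋎ ⊤)) ⋎ (y ⋏ (z ⋎ ⊤)))) ≋
        (∼(x ⋏ (z ⋎ ⊤)) ⋏ ∼(y ⋏ (z ⋎ ⊤))) := dm_or _ _
      _ ≋ ((∼x ⋎ ∼(z ⋎ ⊤)) ⋏ (∼y ⋎ ∼(z ⋎ ⊤))) := andc (dm_and _ _) (dm_and _ _)
      _ ≋ ((∼x ⋎ (∼z ⋏ ⊥)) ⋏ (∼y ⋎ (∼z ⋏ ⊥))) := andc (orc rf hz) (orc rf hz)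
  exact hL.trans hR.symm


/-! ### Binary atom trees, T-terms and F-terms -/

inductive BT (A : Type) : Type
  | leaf : BT A
  | node : A → BT A → BT A → BT A

def mirror : BT A → BT A
  | .leaf => .leaf
  | .node a l r => .node a (mirror r) (mirror l)

def graft : BT A → BT A → BT A
  | .leaf, q => q
  | .node a l r, q => .node a (graft l q) (graft r q)

theorem mirror_mirror (p : BT A) : mirror (mirror p) = p := by
  induction p with
  | leaf => rfl
  | node a l r ihl ihr => simp [mirror, ihl, ihr]

def toT : BT A → STerm A
  | .leaf => ⊤
  | .node a l r => ((STerm.atom a) ⋏ toT l) ⋎ toT r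

def toF : BT A → STerm A
  | .leaf => ⊥
  | .node a l r => ((STerm.atom a) ⋎ toF l) ⋏ toF r

theorem isT_toT (p : BT A) : IsST_T (toT p) := by
  induction p with
  | leaf => exact IsST_T.tru
  | node a l r ihl ihr => exact IsST_T.or a ihl ihr

theorem isF_toF (p : BT A) : IsST_F (toF p) := by
  induction p with
  | leaf => exact IsST_F.fls
  | node a l r ihl ihr => exact IsST_F.and a ihl ihr

/-- `toF p ⋏ x = toF p`. -/
theorem FANDL (p : BT A) (x : STerm A) : (toF p ⋏ x) ≋ toF p := by
  induction p generalizing x with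
  | leaf => exact EqFSCL.scl7 x
  | node a l r ihl ihr =>
    calc ((((STerm.atom a) ⋎ toF l) ⋏ toF r) ⋏ x)
        ≋ (((STerm.atom a) ⋎ toF l) ⋏ (toF r ⋏ x)) := EqFSCL.scl4 _ _ _
      _ ≋ (((STerm.atom a) ⋎ toF l) ⋏ toF r) := andc rf (ihr x)

theorem toF_stable (p : BT A) : (toF p ⋏ ⊥) ≋ toF p := FANDL p ⊥

/-! ### Negation-normal terms -/

inductive PT (A : Type) : Type
  | lit : Bool → A → PT A
  | tru : PT A
  | fls : PT A
  | and : PT A → PT A → PT A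
  | or : PT A → PT A → PT A

def emb : PT A → STerm A
  | .lit true a => .atom a
  | .lit false a => ∼(.atom a)
  | .tru => ⊤
  | .fls => ⊥
  | .and x y => emb x ⋏ emb y
  | .or x y => emb x ⋎ emb y

def pneg : PT A → PT A
  | .lit b a => .lit (!b) a
  | .tru => .fls
  | .fls => .tru
  | .and x y => .or (pneg x) (pneg y)
  | .or x y => .and (pneg x) (pneg y)

theorem emb_pneg (u : PT A) : (∼emb u) ≋ emb (pneg u) := by
  induction u with
  | lit b a =>
    cases b
    · exact (nn _)
    · exact rf
  | tru => exact negT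
  | fls => exact negF
  | and x y ihx ihy => exact (dm_and _ _).trans (orc ihx ihy)
  | or x y ihx ihy => exact (dm_or _ _).trans (andc ihx ihy)

def nnf : STerm A → PT A
  | .atom a => .lit true a
  | .tru => .tru
  | .fls => .fls
  | .neg x => pneg (nnf x)
  | .and x y => .and (nnf x) (nnf y)
  | .or x y => .or (nnf x) (nnf y)

theorem nnf_correct (x : STerm A) : x ≋ emb (nnf x) := by
  induction x with
  | atom a => exact rf
  | tru => exact rf
  | fls => exact rf
  | neg x ih => exact (negc ih).trans (emb_pneg _)
  | and x y ihx ihy => exact andc ihx ihy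
  | or x y ihx ihy => exact orc ihx ihy

def btT : BT A → PT A
  | .leaf => .tru
  | .node a l r => .or (.and (.lit true a) (btT l)) (btT r)

def btF : BT A → PT A
  | .leaf => .fls
  | .node a l r => .and (.or (.lit true a) (btF l)) (btF r)

theorem emb_btT (p : BT A) : emb (btT p) = toT p := by
  induction p with
  | leaf => rfl
  | node a l r ihl ihr => simp [btT, emb, toT, ihl, ihr]

theorem emb_btF (p : BT A) : emb (btF p) = toF p := by
  induction p with
  | leaf => rfl
  | node a l r ihl ihr => simp [btF, emb, toF, ihl, ihr]

/-- every T-term has the form `u ⋎ ⊤` with `u` negation-normal. -/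
theorem TFORM (p : BT A) : ∃ u : PT A, toT p ≋ (emb u ⋎ ⊤) := by
  induction p with
  | leaf => exact ⟨.fls, (For ⊤).symm⟩
  | node a l r ihl ihr =>
    obtain ⟨u, hu⟩ := ihr
    refine ⟨.or (.and (.lit true a) (btT l)) u, ?_⟩
    have h0 : emb (PT.or (.and (.lit true a) (btT l)) u)
        = (((STerm.atom a) ⋏ toT l) ⋎ emb u) := by
      simp [emb, emb_btT]
    rw [h0]
    calc (((STerm.atom a) ⋏ toT l) ⋎ toT r)
        ≋ (((STerm.atom a) ⋏ toT l) ⋎ (emb u ⋎ ⊤)) := orc rf hu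
      _ ≋ ((((STerm.atom a) ⋏ toT l) ⋎ emb u) ⋎ ⊤) := (or_assoc3 _ _ _).symm

/-- every F-term has the form `u ⋏ ⊥` with `u` negation-normal. -/
theorem FFORM (p : BT A) : ∃ u : PT A, toF p ≋ (emb u ⋏ ⊥) := by
  induction p with
  | leaf => exact ⟨.tru, (EqFSCL.scl5 ⊥).symm⟩
  | node a l r ihl ihr =>
    obtain ⟨u, hu⟩ := ihr
    refine ⟨.and (.or (.lit true a) (btF l)) u, ?_⟩
    have h0 : emb (PT.and (.or (.lit true a) (btF l)) u)
        = (((STerm.atom a) ⋎ toF l) ⋏ emb u) := by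
      simp [emb, emb_btF]
    rw [h0]
    calc (((STerm.atom a) ⋎ toF l) ⋏ toF r)
        ≋ (((STerm.atom a) ⋎ toF l) ⋏ (emb u ⋏ ⊥)) := andc rf hu
      _ ≋ ((((STerm.atom a) ⋎ toF l) ⋏ emb u) ⋏ ⊥) := (EqFSCL.scl4 _ _ _).symm


/-! ### The master lemma: conjunction with an F-term yields an F-term -/

theorem Mthm (u : PT A) :
    (∀ w, ∃ c, ((emb u) ⋏ toF w) ≋ toF c) ∧
    (∀ v : STerm A, (∀ w, ∃ c, (v ⋏ toF w) ≋ toF c) →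
      ∀ w, ∃ c, (((emb u) ⋎ v) ⋏ toF w) ≋ toF c) := by
  induction u with
  | lit b a =>
    cases b
    · -- negative literal ∼a
      constructor
      · intro w
        exact ⟨.node a w .leaf, NANDF (.atom a) (toF w) (toF_stable w)⟩
      · intro v hv w
        obtain ⟨c₁, h₁⟩ := hv w
        refine ⟨.node a w c₁, ?_⟩
        calc ((∼(STerm.atom a) ⋎ v) ⋏ toF w)
            ≋ ((∼(STerm.atom a) ⋎ (v ⋏ toF w)) ⋏ toF w) :=
              lam9 _ v (toF w) (toF_stable w)
          _ ≋ ((∼(STerm.atom a) ⋎ toF c₁) ⋏ toF w) := andc (orc rf h₁) rf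
          _ ≋ (((STerm.atom a) ⋎ toF w) ⋏ toF c₁) :=
              lam5 (.atom a) (toF c₁) (toF w) (toF_stable c₁) (toF_stable w)
    · -- positive literal a
      constructor
      · intro w
        exact ⟨.node a .leaf w, andc (orF (.atom a)).symm rf⟩
      · intro v hv w
        obtain ⟨c₁, h₁⟩ := hv w
        refine ⟨.node a c₁ w, ?_⟩
        calc (((STerm.atom a) ⋎ v) ⋏ toF w)
            ≋ (((STerm.atom a) ⋎ (v ⋏ toF w)) ⋏ toF w) :=
              lam9 _ v (toF w) (toF_stable w)
          _ ≋ (((STerm.atom a) ⋎ toF c₁) ⋏ toF w) := andc (orc rf h₁) rf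
  | tru =>
    constructor
    · intro w; exact ⟨w, EqFSCL.scl5 _⟩
    · intro v hv w
      exact ⟨w, (andc (orT v) rf).trans (EqFSCL.scl5 _)⟩
  | fls =>
    constructor
    · intro w; exact ⟨.leaf, EqFSCL.scl7 _⟩
    · intro v hv w
      obtain ⟨c₁, h₁⟩ := hv w
      exact ⟨c₁, (andc (For v) rf).trans h₁⟩
  | and x y ihx ihy =>
    constructor
    · intro w
      obtain ⟨c₁, h₁⟩ := ihy.1 w
      obtain ⟨c₂, h₂⟩ := ihx.1 c₁
      refine ⟨c₂, ?_⟩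
      calc ((emb x ⋏ emb y) ⋏ toF w)
          ≋ (emb x ⋏ (emb y ⋏ toF w)) := EqFSCL.scl4 _ _ _
        _ ≋ (emb x ⋏ toF c₁) := andc rf h₁
        _ ≋ toF c₂ := h₂
    · intro v hv w
      obtain ⟨c₁, h₁⟩ := hv w
      obtain ⟨c₂, h₂⟩ := ihy.2 v hv w
      obtain ⟨c₃, h₃⟩ := ihx.2 (toF c₁) (fun w' => ⟨c₁, FANDL c₁ (toF w')⟩) c₂
      refine ⟨c₃, ?_⟩
      calc (((emb x ⋏ emb y) ⋎ v) ⋏ toF w)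
          ≋ ((emb x ⋎ (v ⋏ toF w)) ⋏ ((emb y ⋎ v) ⋏ toF w)) :=
            lam2 _ _ v (toF w) (toF_stable w)
        _ ≋ ((emb x ⋎ toF c₁) ⋏ toF c₂) := andc (orc rf h₁) h₂
        _ ≋ toF c₃ := h₃
  | or x y ihx ihy =>
    constructor
    · intro w
      exact ihx.2 (emb y) ihy.1 w
    · intro v hv w
      obtain ⟨c₁, h₁⟩ := ihx.2 (emb y ⋎ v) (ihy.2 v hv) w
      refine ⟨c₁, ?_⟩
      calc (((emb x ⋎ emb y) ⋎ v) ⋏ toF w)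
          ≋ ((emb x ⋎ (emb y ⋎ v)) ⋏ toF w) := andc (or_assoc3 _ _ _) rf
        _ ≋ toF c₁ := h₁

/-- T-term ⋏ F-term is an F-term. -/
theorem TANDF (p w : BT A) : ∃ c, (toT p ⋏ toF w) ≋ toF c := by
  obtain ⟨u, hu⟩ := TFORM p
  obtain ⟨c₁, h₁⟩ := (Mthm u).1 .leaf
  obtain ⟨γ, hγ⟩ := FFORM c₁
  obtain ⟨ω, hω⟩ := FFORM w
  obtain ⟨d, hd⟩ := (Mthm γ).2 (toF w) (fun w' => ⟨w, FANDL w (toF w')⟩) w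
  refine ⟨d, ?_⟩
  calc (toT p ⋏ toF w)
      ≋ ((emb u ⋎ ⊤) ⋏ toF w) := andc hu rf
    _ ≋ ((emb u ⋏ ⊥) ⋎ toF w) := (EqFSCL.scl9 _ _).symm
    _ ≋ (toF c₁ ⋎ toF w) := orc h₁ rf
    _ ≋ ((emb γ ⋏ ⊥) ⋎ (emb ω ⋏ ⊥)) := orc hγ hω
    _ ≋ ((emb γ ⋎ (emb ω ⋏ ⊥)) ⋏ (⊥ ⋎ (emb ω ⋏ ⊥))) := EqFSCL.scl10 _ _ _
    _ ≋ ((emb γ ⋎ toF w) ⋏ (⊥ ⋎ toF w)) := andc (orc rf hω.symm) (orc rf hω.symm)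
    _ ≋ ((emb γ ⋎ toF w) ⋏ toF w) := andc rf (For _)
    _ ≋ toF d := hd

/-- F-term ⋎ F-term is an F-term. -/
theorem FORF (p w : BT A) : ∃ c, (toF p ⋎ toF w) ≋ toF c := by
  obtain ⟨γ, hγ⟩ := FFORM p
  obtain ⟨ω, hω⟩ := FFORM w
  obtain ⟨d, hd⟩ := (Mthm γ).2 (toF w) (fun w' => ⟨w, FANDL w (toF w')⟩) w
  refine ⟨d, ?_⟩
  calc (toF p ⋎ toF w)
      ≋ ((emb γ ⋏ ⊥) ⋎ (emb ω ⋏ ⊥)) := orc hγ hω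
    _ ≋ ((emb γ ⋎ (emb ω ⋏ ⊥)) ⋏ (⊥ ⋎ (emb ω ⋏ ⊥))) := EqFSCL.scl10 _ _ _
    _ ≋ ((emb γ ⋎ toF w) ⋏ (⊥ ⋎ toF w)) := andc (orc rf hω.symm) (orc rf hω.symm)
    _ ≋ ((emb γ ⋎ toF w) ⋏ toF w) := andc rf (For _)
    _ ≋ toF d := hd

/-- distribution of ⋏ a T-term over ⋎. -/
theorem lam4t (x y : STerm A) (q : BT A) :
    ((x ⋎ y) ⋏ toT q) ≋ ((x ⋏ toT q) ⋎ (y ⋏ toT q)) := by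
  obtain ⟨u, hu⟩ := TFORM q
  calc ((x ⋎ y) ⋏ toT q)
      ≋ ((x ⋎ y) ⋏ (emb u ⋎ ⊤)) := andc rf hu
    _ ≋ ((x ⋏ (emb u ⋎ ⊤)) ⋎ (y ⋏ (emb u ⋎ ⊤))) := lam4g _ _ _
    _ ≋ ((x ⋏ toT q) ⋎ (y ⋏ toT q)) := orc (andc rf hu.symm) (andc rf hu.symm)

/-- T-term ⋏ T-term. -/
theorem TANDT (p q : BT A) : (toT p ⋏ toT q) ≋ toT (graft p q) := by
  induction p with
  | leaf => exact EqFSCL.scl5 _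
  | node a l r ihl ihr =>
    calc ((((STerm.atom a) ⋏ toT l) ⋎ toT r) ⋏ toT q)
        ≋ ((((STerm.atom a) ⋏ toT l) ⋏ toT q) ⋎ (toT r ⋏ toT q)) := lam4t _ _ q
      _ ≋ (((STerm.atom a) ⋏ (toT l ⋏ toT q)) ⋎ (toT r ⋏ toT q)) :=
          orc (EqFSCL.scl4 _ _ _) rf
      _ ≋ (((STerm.atom a) ⋏ toT (graft l q)) ⋎ toT (graft r q)) := orc (andc rf ihl) ihr

/-- Negation of T-terms. -/
theorem negT_toF (p : BT A) : (∼toT p) ≋ toF (mirror p) := by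
  induction p with
  | leaf => exact negT
  | node a l r ihl ihr =>
    calc (∼(((STerm.atom a) ⋏ toT l) ⋎ toT r))
        ≋ (∼((STerm.atom a) ⋏ toT l) ⋏ ∼toT r) := dm_or _ _
      _ ≋ ((∼(STerm.atom a) ⋎ ∼toT l) ⋏ ∼toT r) := andc (dm_and _ _) rf
      _ ≋ ((∼(STerm.atom a) ⋎ toF (mirror l)) ⋏ toF (mirror r)) := andc (orc rf ihl) ihr
      _ ≋ (((STerm.atom a) ⋎ toF (mirror r)) ⋏ toF (mirror l)) :=
          lam5 _ _ _ (toF_stable (mirror l)) (toF_stable (mirror r))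

/-- Negation of F-terms. -/
theorem negF_toT (p : BT A) : (∼toF p) ≋ toT (mirror p) := by
  apply neg_inj
  calc (∼∼toF p) ≋ toF p := nn _
    _ ≋ toF (mirror (mirror p)) := by rw [mirror_mirror]; exact rf
    _ ≋ (∼toT (mirror p)) := (negT_toF (mirror p)).symm

/-- T-term prefixes commute with negation. -/
theorem negT_pull (p : BT A) (x : STerm A) :
    (∼(toT p ⋏ x)) ≋ (toT p ⋏ ∼x) := by
  obtain ⟨u, hu⟩ := TFORM p
  calc (∼(toT p ⋏ x))
      ≋ (∼((emb u ⋎ ⊤) ⋏ x)) := negc (andc hu rf)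
    _ ≋ (∼((emb u ⋏ ⊥) ⋎ x)) := negc (EqFSCL.scl9 _ _).symm
    _ ≋ (∼(emb u ⋏ ⊥) ⋏ ∼x) := dm_or _ _
    _ ≋ ((∼emb u ⋎ ∼⊥) ⋏ ∼x) := andc (dm_and _ _) rf
    _ ≋ ((∼emb u ⋎ ⊤) ⋏ ∼x) := andc (orc rf negF) rf
    _ ≋ ((emb u ⋎ ⊤) ⋏ ∼x) := andc (negorT _) rf
    _ ≋ (toT p ⋏ ∼x) := andc hu.symm rf

/-- `(x ⋎ F-term) ⋏ T-term = (x ⋏ T-term) ⋎ F-term`. -/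
theorem lam6 (x : STerm A) (v w : BT A) :
    ((x ⋎ toF v) ⋏ toT w) ≋ ((x ⋏ toT w) ⋎ toF v) :=
  (lam4t x (toF v) w).trans (orc rf (FANDL v (toT w)))


/-! ### Stars -/

inductive NS (A : Type) : Type
  | lit : Bool → A → BT A → BT A → NS A
  | and : NS A → NS A → NS A
  | or : NS A → NS A → NS A

def litS (b : Bool) (a : A) : STerm A := bif b then .atom a else ∼(.atom a)

def toNS : NS A → STerm A
  | .lit b a p q => (litS b a ⋏ toT p) ⋎ toF q
  | .and x y => toNS x ⋏ toNS y
  | .or x y => toNS x ⋎ toNS y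

def nsP : NS A → PT A
  | .lit b a p q => .or (.and (.lit b a) (btT p)) (btF q)
  | .and x y => .and (nsP x) (nsP y)
  | .or x y => .or (nsP x) (nsP y)

theorem emb_nsP (s : NS A) : emb (nsP s) = toNS s := by
  induction s with
  | lit b a p q => cases b <;> simp [nsP, emb, toNS, litS, emb_btT, emb_btF]
  | and x y ihx ihy => simp [nsP, emb, toNS, ihx, ihy]
  | or x y ihx ihy => simp [nsP, emb, toNS, ihx, ihy]

/-- star ⋏ F-term is an F-term. -/
theorem STARF (s : NS A) (w : BT A) : ∃ c, (toNS s ⋏ toF w) ≋ toF c := by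
  have h := (Mthm (nsP s)).1 w
  rwa [emb_nsP] at h

def isAnd : NS A → Bool
  | .and _ _ => true
  | _ => false

def isOr : NS A → Bool
  | .or _ _ => true
  | _ => false

def Good : NS A → Prop
  | .lit _ _ _ _ => True
  | .and x y => Good x ∧ Good y ∧ isAnd y = false
  | .or x y => Good x ∧ Good y ∧ isOr y = false

def negNS : NS A → NS A
  | .lit b a p q => .lit (!b) a (mirror q) (mirror p)
  | .and x y => .or (negNS x) (negNS y)
  | .or x y => .and (negNS x) (negNS y)

theorem negNS_correct (s : NS A) : (∼toNS s) ≋ toNS (negNS s) := by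
  induction s with
  | lit b a p q =>
    cases b
    · show (∼((∼(STerm.atom a) ⋏ toT p) ⋎ toF q)) ≋
        (((STerm.atom a) ⋏ toT (mirror q)) ⋎ toF (mirror p))
      calc (∼((∼(STerm.atom a) ⋏ toT p) ⋎ toF q))
          ≋ (∼(∼(STerm.atom a) ⋏ toT p) ⋏ ∼toF q) := dm_or _ _
        _ ≋ ((∼∼(STerm.atom a) ⋎ ∼toT p) ⋏ ∼toF q) := andc (dm_and _ _) rf
        _ ≋ (((STerm.atom a) ⋎ toF (mirror p)) ⋏ toT (mirror q)) :=
            andc (orc (nn _) (negT_toF p)) (negF_toT q)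
        _ ≋ (((STerm.atom a) ⋏ toT (mirror q)) ⋎ toF (mirror p)) := lam6 _ _ _
    · show (∼(((STerm.atom a) ⋏ toT p) ⋎ toF q)) ≋
        ((∼(STerm.atom a) ⋏ toT (mirror q)) ⋎ toF (mirror p))
      calc (∼(((STerm.atom a) ⋏ toT p) ⋎ toF q))
          ≋ (∼((STerm.atom a) ⋏ toT p) ⋏ ∼toF q) := dm_or _ _
        _ ≋ ((∼(STerm.atom a) ⋎ ∼toT p) ⋏ ∼toF q) := andc (dm_and _ _) rf
        _ ≋ ((∼(STerm.atom a) ⋎ toF (mirror p)) ⋏ toT (mirror q)) :=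
            andc (orc rf (negT_toF p)) (negF_toT q)
        _ ≋ ((∼(STerm.atom a) ⋏ toT (mirror q)) ⋎ toF (mirror p)) := lam6 _ _ _
  | and x y ihx ihy => exact (dm_and _ _).trans (orc ihx ihy)
  | or x y ihx ihy => exact (dm_or _ _).trans (andc ihx ihy)

theorem isAnd_negNS (s : NS A) : isAnd (negNS s) = isOr s := by
  cases s <;> rfl

theorem isOr_negNS (s : NS A) : isOr (negNS s) = isAnd s := by
  cases s <;> rfl

theorem good_negNS (s : NS A) (h : Good s) : Good (negNS s) := by
  induction s with
  | lit b a p q => trivial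
  | and x y ihx ihy =>
    obtain ⟨hx, hy, hn⟩ := h
    exact ⟨ihx hx, ihy hy, by rw [isOr_negNS]; exact hn⟩
  | or x y ihx ihy =>
    obtain ⟨hx, hy, hn⟩ := h
    exact ⟨ihx hx, ihy hy, by rw [isAnd_negNS]; exact hn⟩

/-- star ⋏ T-term. -/
def sconjT : NS A → BT A → NS A
  | .lit b a p q, w => .lit b a (graft p w) q
  | .and x y, w => .and x (sconjT y w)
  | .or x y, w => .or (sconjT x w) (sconjT y w)

theorem sconjT_correct (s : NS A) (w : BT A) :
    (toNS s ⋏ toT w) ≋ toNS (sconjT s w) := by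
  induction s with
  | lit b a p q =>
    show (((litS b a ⋏ toT p) ⋎ toF q) ⋏ toT w) ≋
      ((litS b a ⋏ toT (graft p w)) ⋎ toF q)
    calc (((litS b a ⋏ toT p) ⋎ toF q) ⋏ toT w)
        ≋ (((litS b a ⋏ toT p) ⋏ toT w) ⋎ (toF q ⋏ toT w)) := lam4t _ _ w
      _ ≋ ((litS b a ⋏ (toT p ⋏ toT w)) ⋎ toF q) :=
          orc (EqFSCL.scl4 _ _ _) (FANDL q _)
      _ ≋ ((litS b a ⋏ toT (graft p w)) ⋎ toF q) := orc (andc rf (TANDT p w)) rf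
  | and x y ihx ihy =>
    calc ((toNS x ⋏ toNS y) ⋏ toT w)
        ≋ (toNS x ⋏ (toNS y ⋏ toT w)) := EqFSCL.scl4 _ _ _
      _ ≋ (toNS x ⋏ toNS (sconjT y w)) := andc rf ihy
  | or x y ihx ihy =>
    calc ((toNS x ⋎ toNS y) ⋏ toT w)
        ≋ ((toNS x ⋏ toT w) ⋎ (toNS y ⋏ toT w)) := lam4t _ _ w
      _ ≋ (toNS (sconjT x w) ⋎ toNS (sconjT y w)) := orc ihx ihy

theorem isAnd_sconjT (s : NS A) (w : BT A) : isAnd (sconjT s w) = isAnd s := by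
  cases s <;> rfl

theorem isOr_sconjT (s : NS A) (w : BT A) : isOr (sconjT s w) = isOr s := by
  cases s <;> rfl

theorem good_sconjT (s : NS A) (w : BT A) (h : Good s) : Good (sconjT s w) := by
  induction s with
  | lit b a p q => trivial
  | and x y ihx ihy =>
    obtain ⟨hx, hy, hn⟩ := h
    exact ⟨hx, ihy hy, by rw [isAnd_sconjT]; exact hn⟩
  | or x y ihx ihy =>
    obtain ⟨hx, hy, hn⟩ := h
    exact ⟨ihx hx, ihy hy, by rw [isOr_sconjT]; exact hn⟩

/-- star ⋏ star with left re-association. -/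
def nand : NS A → NS A → NS A
  | x, .and y z => nand (nand x y) z
  | x, .lit b a p q => .and x (.lit b a p q)
  | x, .or y z => .and x (.or y z)

theorem nand_correct (y x : NS A) : toNS (nand x y) ≋ (toNS x ⋏ toNS y) := by
  induction y generalizing x with
  | lit b a p q => exact rf
  | and y₁ y₂ ih₁ ih₂ =>
    calc toNS (nand (nand x y₁) y₂)
        ≋ (toNS (nand x y₁) ⋏ toNS y₂) := ih₂ _
      _ ≋ ((toNS x ⋏ toNS y₁) ⋏ toNS y₂) := andc (ih₁ x) rf
      _ ≋ (toNS x ⋏ (toNS y₁ ⋏ toNS y₂)) := EqFSCL.scl4 _ _ _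
  | or y₁ y₂ ih₁ ih₂ => exact rf

theorem good_nand (y x : NS A) (hx : Good x) (hy : Good y) : Good (nand x y) := by
  induction y generalizing x with
  | lit b a p q => exact ⟨hx, trivial, rfl⟩
  | and y₁ y₂ ih₁ ih₂ =>
    obtain ⟨h₁, h₂, hn⟩ := hy
    exact ih₂ (nand x y₁) (ih₁ x hx h₁) h₂
  | or y₁ y₂ ih₁ ih₂ =>
    exact ⟨hx, hy, rfl⟩

theorem isAnd_nand (y x : NS A) : isAnd (nand x y) = true := by
  induction y generalizing x with
  | lit b a p q => rfl
  | and y₁ y₂ ih₁ ih₂ => exact ih₂ (nand x y₁)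
  | or y₁ y₂ ih₁ ih₂ => rfl

/-- Good stars generate the SNF star grammar. -/
theorem isL_lit (b : Bool) (a : A) (p q : BT A) :
    IsST_L (toNS (.lit b a p q)) := by
  cases b
  · exact IsST_L.neg a (isT_toT p) (isF_toF q)
  · exact IsST_L.pos a (isT_toT p) (isF_toF q)

theorem good_star (s : NS A) (h : Good s) :
    IsST_Star (toNS s) ∧ (isAnd s = false → IsST_D (toNS s)) ∧
      (isOr s = false → IsST_C (toNS s)) := by
  induction s with
  | lit b a p q =>
    exact ⟨IsST_Star.c (IsST_C.ell (isL_lit b a p q)),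
      fun _ => IsST_D.ell (isL_lit b a p q),
      fun _ => IsST_C.ell (isL_lit b a p q)⟩
  | and x y ihx ihy =>
    obtain ⟨hx, hy, hn⟩ := h
    have hc : IsST_C (toNS x ⋏ toNS y) :=
      IsST_C.and (ihx hx).1 ((ihy hy).2.1 hn)
    exact ⟨IsST_Star.c hc, fun hh => by simp [isAnd] at hh, fun _ => hc⟩
  | or x y ihx ihy =>
    obtain ⟨hx, hy, hn⟩ := h
    have hd : IsST_D (toNS x ⋎ toNS y) :=
      IsST_D.or (ihx hx).1 ((ihy hy).2.2 hn)
    exact ⟨IsST_Star.d hd, fun _ => hd, fun hh => by simp [isOr] at hh⟩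


/-! ### Normal forms -/

inductive NF (A : Type) : Type
  | t : BT A → NF A
  | f : BT A → NF A
  | ts : BT A → NS A → NF A

def toNF : NF A → STerm A
  | .t p => toT p
  | .f p => toF p
  | .ts p s => toT p ⋏ toNS s

def GoodNF : NF A → Prop
  | .ts _ s => Good s
  | _ => True

theorem snf_toNF (n : NF A) (h : GoodNF n) : IsSNF (toNF n) := by
  cases n with
  | t p => exact IsSNF.t (isT_toT p)
  | f p => exact IsSNF.f (isF_toF p)
  | ts p s => exact IsSNF.ts (isT_toT p) (good_star s h).1

def negNF : NF A → NF A
  | .t p => .f (mirror p)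
  | .f p => .t (mirror p)
  | .ts p s => .ts p (negNS s)

theorem negNF_correct (n : NF A) : (∼toNF n) ≋ toNF (negNF n) := by
  cases n with
  | t p => exact negT_toF p
  | f p => exact negF_toT p
  | ts p s => exact (negT_pull p _).trans (andc rf (negNS_correct s))

theorem good_negNF (n : NF A) (h : GoodNF n) : GoodNF (negNF n) := by
  cases n with
  | t p => trivial
  | f p => trivial
  | ts p s => exact good_negNS s h

/-- Conjunction of normal forms. -/
theorem conjNF (m n : NF A) (hm : GoodNF m) (hn : GoodNF n) :
    ∃ k, GoodNF k ∧ ((toNF m ⋏ toNF n) ≋ toNF k) := by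
  cases m with
  | f p => exact ⟨.f p, trivial, FANDL p _⟩
  | t p =>
    cases n with
    | t q => exact ⟨.t (graft p q), trivial, TANDT p q⟩
    | f q =>
      obtain ⟨c, hc⟩ := TANDF p q
      exact ⟨.f c, trivial, hc⟩
    | ts q s =>
      refine ⟨.ts (graft p q) s, hn, ?_⟩
      calc (toT p ⋏ (toT q ⋏ toNS s))
          ≋ ((toT p ⋏ toT q) ⋏ toNS s) := (EqFSCL.scl4 _ _ _).symm
        _ ≋ (toT (graft p q) ⋏ toNS s) := andc (TANDT p q) rf
  | ts p s =>
    cases n with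
    | t q =>
      refine ⟨.ts p (sconjT s q), good_sconjT s q hm, ?_⟩
      calc ((toT p ⋏ toNS s) ⋏ toT q)
          ≋ (toT p ⋏ (toNS s ⋏ toT q)) := EqFSCL.scl4 _ _ _
        _ ≋ (toT p ⋏ toNS (sconjT s q)) := andc rf (sconjT_correct s q)
    | f q =>
      obtain ⟨c, hc⟩ := STARF s q
      obtain ⟨d, hd⟩ := TANDF p c
      refine ⟨.f d, trivial, ?_⟩
      calc ((toT p ⋏ toNS s) ⋏ toF q)
          ≋ (toT p ⋏ (toNS s ⋏ toF q)) := EqFSCL.scl4 _ _ _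
        _ ≋ (toT p ⋏ toF c) := andc rf hc
        _ ≋ toF d := hd
    | ts q s' =>
      refine ⟨.ts p (nand (sconjT s q) s'),
        good_nand s' (sconjT s q) (good_sconjT s q hm) hn, ?_⟩
      calc ((toT p ⋏ toNS s) ⋏ (toT q ⋏ toNS s'))
          ≋ (toT p ⋏ (toNS s ⋏ (toT q ⋏ toNS s'))) := EqFSCL.scl4 _ _ _
        _ ≋ (toT p ⋏ ((toNS s ⋏ toT q) ⋏ toNS s')) := andc rf (EqFSCL.scl4 _ _ _).symm
        _ ≋ (toT p ⋏ (toNS (sconjT s q) ⋏ toNS s')) :=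
            andc rf (andc (sconjT_correct s q) rf)
        _ ≋ (toT p ⋏ toNS (nand (sconjT s q) s')) :=
            andc rf (nand_correct s' (sconjT s q)).symm

/-- Disjunction of normal forms. -/
theorem disjNF (m n : NF A) (hm : GoodNF m) (hn : GoodNF n) :
    ∃ k, GoodNF k ∧ ((toNF m ⋎ toNF n) ≋ toNF k) := by
  obtain ⟨k₀, hk₀, h₀⟩ :=
    conjNF (negNF m) (negNF n) (good_negNF m hm) (good_negNF n hn)
  refine ⟨negNF k₀, good_negNF k₀ hk₀, ?_⟩
  calc (toNF m ⋎ toNF n)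
      ≋ ∼(∼toNF m ⋏ ∼toNF n) := EqFSCL.scl2 _ _
    _ ≋ ∼(toNF (negNF m) ⋏ toNF (negNF n)) :=
        negc (andc (negNF_correct m) (negNF_correct n))
    _ ≋ ∼(toNF k₀) := negc h₀
    _ ≋ toNF (negNF k₀) := negNF_correct k₀

/-- Main normalization for negation-normal terms. -/
theorem mainPT (u : PT A) : ∃ n : NF A, GoodNF n ∧ (emb u ≋ toNF n) := by
  induction u with
  | lit b a =>
    refine ⟨.ts .leaf (.lit b a .leaf .leaf), trivial, ?_⟩
    have h : emb (PT.lit b a) = litS b a := by cases b <;> rfl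
    rw [h]
    show (litS b a) ≋ (⊤ ⋏ ((litS b a ⋏ ⊤) ⋎ ⊥))
    refine EqFSCL.symm ?_
    calc (⊤ ⋏ ((litS b a ⋏ ⊤) ⋎ ⊥))
        ≋ ((litS b a ⋏ ⊤) ⋎ ⊥) := EqFSCL.scl5 _
      _ ≋ (litS b a ⋏ ⊤) := orF _
      _ ≋ litS b a := EqFSCL.scl6 _
  | tru => exact ⟨.t .leaf, trivial, rf⟩
  | fls => exact ⟨.f .leaf, trivial, rf⟩
  | and x y ihx ihy =>
    obtain ⟨nx, gx, hx⟩ := ihx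
    obtain ⟨ny, gy, hy⟩ := ihy
    obtain ⟨k, gk, hk⟩ := conjNF nx ny gx gy
    exact ⟨k, gk, (andc hx hy).trans hk⟩
  | or x y ihx ihy =>
    obtain ⟨nx, gx, hx⟩ := ihx
    obtain ⟨ny, gy, hy⟩ := ihy
    obtain ⟨k, gk, hk⟩ := disjNF nx ny gx gy
    exact ⟨k, gk, (orc hx hy).trans hk⟩

theorem normal_form (P : STerm A) : ∃ Q : STerm A, IsSNF Q ∧ EqFSCL P Q := by
  obtain ⟨n, gn, hn⟩ := mainPT (nnf P)
  exact ⟨toNF n, snf_toNF n gn, (nnf_correct P).trans hn⟩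

end SCLProof

/-- normal form theorem for SCL. -/
theorem fscl_normal_form (A : Type) [Countable A] (P : STerm A) :
    ∃ Q : STerm A, IsSNF Q ∧ EqFSCL P Q :=
  SCLProof.normal_form P
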